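/- arXiv:1608.08766 — 4 statements merged into one kernel-verified Lean document; each statement's English description precedes it below -/
import Mathlib

section
/- Let N ∈ ℕ and a ∈ ℤ be coprime, and let m = ord_N(a) be the multiplicative order of a modulo N. Then ord_p(a) = m for all primes p dividing N if and only if gcd(N, a^(m/r) - 1) = 1 for all primes r dividing m. -/
/-!
Both conditions say that `a` has order exactly `m` modulo every prime `p ∣ N`. Since `a ^ m ≡ 1`
modulo `N`, hence modulo each such `p`, the order of `a` modulo `p` is `m` iff no `a ^ (m / r)` with
`r` a prime factor of `m` is `1` modulo `p`; and `gcd(N, a ^ (m / r) - 1) = 1` says exactly that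
`a ^ (m / r) ≢ 1` modulo every prime `p ∣ N`.
-/

theorem orderOf_eq_iff_pow_div_prime {G : Type*} [Monoid G] {x : G} {n : ℕ} (hn : 0 < n) :
    orderOf x = n ↔ x ^ n = 1 ∧ ∀ r : ℕ, r.Prime → r ∣ n → x ^ (n / r) ≠ 1 := by
  refine ⟨fun h ↦ ⟨h ▸ pow_orderOf_eq_one x, fun r hr hrn ↦ ?_⟩,
    fun ⟨hx, hd⟩ ↦ orderOf_eq_of_pow_and_pow_div_prime hn hx hd⟩
  exact ((orderOf_eq_iff hn).mp h).2 _ (Nat.div_lt_self hn hr.one_lt)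
    (Nat.div_pos (Nat.le_of_dvd hn hrn) hr.pos)

theorem Int.gcd_natCast_eq_one_iff (N : ℕ) (b : ℤ) :
    Int.gcd (N : ℤ) b = 1 ↔ ∀ p : ℕ, p.Prime → p ∣ N → ¬ (p : ℤ) ∣ b := by
  rw [Nat.eq_one_iff_not_exists_prime_dvd]
  refine forall₂_congr fun p _ ↦ ?_
  rw [Int.gcd, Nat.dvd_gcd_iff, Int.natAbs_natCast, Int.natCast_dvd]
  tauto

theorem Int.gcd_natCast_pow_sub_one_eq_one_iff (N : ℕ) (a : ℤ) (k : ℕ) :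
    Int.gcd (N : ℤ) (a ^ k - 1) = 1 ↔ ∀ p : ℕ, p.Prime → p ∣ N → (a : ZMod p) ^ k ≠ 1 := by
  rw [Int.gcd_natCast_eq_one_iff]
  refine forall₃_congr fun p _ _ ↦ ?_
  rw [← ZMod.intCast_zmod_eq_zero_iff_dvd, Int.cast_sub, Int.cast_pow, Int.cast_one, sub_eq_zero]

theorem ZMod.intCast_pow_eq_one_of_dvd {N p : ℕ} (hp : p ∣ N) {a : ℤ} {k : ℕ}
    (h : (a : ZMod N) ^ k = 1) : (a : ZMod p) ^ k = 1 := by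
  simpa only [map_pow, map_intCast, map_one] using congrArg (ZMod.castHom hp (ZMod p)) h

theorem ZMod.orderOf_intCast_pos {N : ℕ} [NeZero N] {a : ℤ} (ha : Int.gcd a N = 1) :
    0 < orderOf (a : ZMod N) := by
  refine (IsUnit.isOfFinOrder ?_).orderOf_pos
  rw [ZMod.coe_int_isUnit_iff_isCoprime, Int.isCoprime_iff_gcd_eq_one, Int.gcd_comm, ha]

theorem stmt_3 (N : ℕ) (hN : 1 < N) (a : ℤ) (ha : Int.gcd a N = 1)
    (m : ℕ) (hm : m = orderOf (a : ZMod N)) :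
    (∀ p : ℕ, p.Prime → p ∣ N → orderOf (a : ZMod p) = m) ↔
      (∀ r : ℕ, r.Prime → r ∣ m → Int.gcd (N : ℤ) (a ^ (m / r) - 1) = 1) := by
  have : NeZero N := ⟨by omega⟩
  have hm_pos : 0 < m := hm ▸ ZMod.orderOf_intCast_pos ha
  have hpow : ∀ p, p ∣ N → (a : ZMod p) ^ m = 1 := fun p hp ↦
    ZMod.intCast_pow_eq_one_of_dvd hp (hm ▸ pow_orderOf_eq_one _)
  simp only [Int.gcd_natCast_pow_sub_one_eq_one_iff, orderOf_eq_iff_pow_div_prime hm_pos]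
  constructor
  · exact fun h r hr hrm p hp hpN ↦ (h p hp hpN).2 r hr hrm
  · exact fun h p hp hpN ↦ ⟨hpow p hpN, fun r hr hrm ↦ h r hr hrm p hp hpN⟩
end

section
/- Let N ∈ ℕ, let a be coprime to N with multiplicative order m modulo N, and let p be a prime dividing N. If gcd(N, a^(m/r) - 1) = 1 for every prime r dividing m, then p ≡ 1 (mod m). -/
/-!
Reducing modulo a divisor `d ≠ 1` of `N`, the hypothesis says that `a ^ (m / r) ≢ 1 (mod d)` for
every prime `r ∣ m`, while `a ^ m ≡ 1`; hence `a` has order exactly `m` modulo `d`. For `d = p`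
prime, Fermat's little theorem gives `m ∣ p - 1`.
-/

lemma Int.gcd_ne_one_of_dvd_of_dvd {N d : ℕ} {x : ℤ} (hd : d ≠ 1) (hdN : d ∣ N) (hdx : (d : ℤ) ∣ x) :
    Int.gcd N x ≠ 1 := by
  intro hgcd
  have hunit : IsUnit (d : ℤ) :=
    (Int.isCoprime_iff_gcd_eq_one.mpr hgcd).isUnit_of_dvd' (Int.natCast_dvd_natCast.mpr hdN) hdx
  exact hd (by simpa using Int.isUnit_iff_natAbs_eq.mp hunit)

lemma pos_of_forall_prime_gcd_pow_div_sub_one {N m : ℕ} {a : ℤ} (hN : N ≠ 1)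
    (h : ∀ r : ℕ, r.Prime → r ∣ m → Int.gcd (N : ℤ) (a ^ (m / r) - 1) = 1) : 0 < m := by
  refine Nat.pos_of_ne_zero fun hm => hN ?_
  simpa [hm] using h 2 Nat.prime_two (hm ▸ dvd_zero 2)

lemma orderOf_intCast_zmod_of_dvd {N d m : ℕ} {a : ℤ} (hd : d ≠ 1) (hdN : d ∣ N) (hm : 0 < m)
    (hpow : (a : ZMod N) ^ m = 1)
    (h : ∀ r : ℕ, r.Prime → r ∣ m → Int.gcd (N : ℤ) (a ^ (m / r) - 1) = 1) :
    orderOf (a : ZMod d) = m := by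
  refine orderOf_eq_of_pow_and_pow_div_prime hm ?_ fun r hr hrm hpow_r => ?_
  · simpa only [map_pow, map_intCast, map_one] using congrArg (ZMod.castHom hdN (ZMod d)) hpow
  · have hdvd : (d : ℤ) ∣ a ^ (m / r) - 1 := by
      rw [← ZMod.intCast_zmod_eq_zero_iff_dvd]
      push_cast
      rw [hpow_r, sub_self]
    exact Int.gcd_ne_one_of_dvd_of_dvd hd hdN hdvd (h r hr hrm)

theorem stmt_4_general (N : ℕ) (a : ℤ)
    (m : ℕ) (hm : m = orderOf (a : ZMod N))
    (p : ℕ) (hp : p.Prime) (hpN : p ∣ N)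
    (h : ∀ r : ℕ, r.Prime → r ∣ m → Int.gcd (N : ℤ) (a ^ (m / r) - 1) = 1) :
    p ≡ 1 [MOD m] := by
  have : Fact p.Prime := ⟨hp⟩
  have hN : N ≠ 1 := by rintro rfl; exact hp.ne_one (Nat.dvd_one.mp hpN)
  have hm_pos : 0 < m := pos_of_forall_prime_gcd_pow_div_sub_one hN h
  have hpow : (a : ZMod N) ^ m = 1 := hm ▸ pow_orderOf_eq_one _
  have horder : orderOf (a : ZMod p) = m :=
    orderOf_intCast_zmod_of_dvd hp.ne_one hpN hm_pos hpow h
  have ha_ne_zero : (a : ZMod p) ≠ 0 := by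
    intro ha
    have hpow_p := pow_orderOf_eq_one (a : ZMod p)
    rw [horder, ha, zero_pow hm_pos.ne'] at hpow_p
    exact zero_ne_one hpow_p
  have hdvd : m ∣ p - 1 := horder ▸ ZMod.orderOf_dvd_card_sub_one ha_ne_zero
  exact ((Nat.modEq_iff_dvd' hp.one_le).mpr hdvd).symm

theorem stmt_4 (N : ℕ) (a : ℤ) (ha : Int.gcd a N = 1)
    (m : ℕ) (hm : m = orderOf (a : ZMod N))
    (p : ℕ) (hp : p.Prime) (hpN : p ∣ N)
    (h : ∀ r : ℕ, r.Prime → r ∣ m → Int.gcd (N : ℤ) (a ^ (m / r) - 1) = 1) :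
    p ≡ 1 [MOD m] :=
  stmt_4_general N a m hm p hp hpN h
end

section
/- Let N ∈ ℕ and r be an odd prime with gcd(N, r) = 1, and define L_{N,r} = {x + y in ℤ/rℤ : x·y = N in ℤ/rℤ}. Then |L_{N,r}| = (r+1)/2 if N is a quadratic residue modulo r, and |L_{N,r}| = (r-1)/2 if N is a quadratic non-residue modulo r. -/
theorem stmt_11 (N r : ℕ) (hr : r.Prime) (hodd : r ≠ 2) (hNr : ¬ r ∣ N) :
    (IsSquare (N : ZMod r) →
      Set.ncard {s : ZMod r | ∃ x y : ZMod r, x * y = (N : ZMod r) ∧ x + y = s}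
        = (r + 1) / 2) ∧
    (¬ IsSquare (N : ZMod r) →
      Set.ncard {s : ZMod r | ∃ x y : ZMod r, x * y = (N : ZMod r) ∧ x + y = s}
        = (r - 1) / 2) := by
  haveI : Fact r.Prime := ⟨hr⟩
  have hN0 : (N : ZMod r) ≠ 0 := by
    rwa [Ne, ZMod.natCast_eq_zero_iff]
  have h2 : (2 : ZMod r) ≠ 0 := by
    have : ((2:ℕ) : ZMod r) ≠ 0 := by
      rw [Ne, ZMod.natCast_eq_zero_iff]
      exact fun h => hodd ((Nat.prime_dvd_prime_iff_eq hr Nat.prime_two).mp h)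
    simpa using this
  set n : (ZMod r)ˣ := Units.mk0 _ hN0 with hn
  have hnval : (n : ZMod r) = (N : ZMod r) := rfl
  set f : (ZMod r)ˣ → ZMod r := fun x => (x : ZMod r) + ((x⁻¹ * n : (ZMod r)ˣ) : ZMod r)
    with hfdef
  have hinvval : ∀ x : (ZMod r)ˣ, ((x⁻¹ * n : (ZMod r)ˣ) : ZMod r)
      = ((x : ZMod r))⁻¹ * N := by
    intro x
    rw [Units.val_mul, Units.val_inv_eq_inv_val, hnval]
  have hfval : ∀ x : (ZMod r)ˣ, f x = (x : ZMod r) + ((x : ZMod r))⁻¹ * N := by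
    intro x
    rw [hfdef]
    simp only
    rw [hinvval]
  have hsq_iff : ∀ x : (ZMod r)ˣ, x * x = n ↔ (x : ZMod r) * (x : ZMod r) = N := by
    intro x
    rw [Units.ext_iff, Units.val_mul, hnval]
  -- set equality
  have hset : {s : ZMod r | ∃ x y : ZMod r, x * y = (N : ZMod r) ∧ x + y = s}
      = Set.range f := by
    ext s
    simp only [Set.mem_setOf_eq, Set.mem_range]
    constructor
    · rintro ⟨x, y, hxy, hs⟩
      have hx0 : x ≠ 0 := fun h => hN0 (by rw [← hxy, h, zero_mul])
      refine ⟨Units.mk0 x hx0, ?_⟩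
      rw [hfval, Units.val_mk0]
      have hy : x⁻¹ * (N : ZMod r) = y := by
        rw [← hxy, inv_mul_cancel_left₀ hx0]
      rw [hy]; exact hs
    · rintro ⟨x, rfl⟩
      refine ⟨(x : ZMod r), ((x : ZMod r))⁻¹ * N, ?_, (hfval x).symm⟩
      rw [mul_inv_cancel_left₀ x.ne_zero]
  -- key fiber description
  have key : ∀ x y : (ZMod r)ˣ, f x = f y ↔ (y = x ∨ y = x⁻¹ * n) := by
    intro x y
    have hx0 : (x : ZMod r) ≠ 0 := x.ne_zero
    have hy0 : (y : ZMod r) ≠ 0 := y.ne_zero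
    constructor
    · intro h
      rw [hfval, hfval] at h
      have hfac : ((x : ZMod r) - y) * ((x : ZMod r) * y - N) = 0 := by
        field_simp at h
        linear_combination h
      rcases mul_eq_zero.mp hfac with h1 | h1
      · left; exact Units.ext (sub_eq_zero.mp h1).symm
      · right
        apply Units.ext
        rw [hinvval]
        have hxy : (x : ZMod r) * y = N := sub_eq_zero.mp h1
        rw [← hxy, inv_mul_cancel_left₀ hx0]
    · rintro (rfl | rfl)
      · rfl
      · rw [hfval, hfval, hinvval]
        have hnn : ((x : ZMod r)⁻¹ * N) ≠ 0 := mul_ne_zero (inv_ne_zero hx0) hN0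
        field_simp
        ring
  classical
  set U : Finset (ZMod r)ˣ := Finset.univ
  set I : Finset (ZMod r) := U.image f with hI
  set F : Finset (ZMod r)ˣ := U.filter (fun x => x * x = n) with hF
  have h3 : ∀ s ∈ I, (U.filter (fun x => f x = s)).card
      + (F.filter (fun x => f x = s)).card = 2 := by
    intro s hs
    obtain ⟨x, -, hx⟩ := Finset.mem_image.mp hs
    have hx0 : (x : ZMod r) ≠ 0 := x.ne_zero
    by_cases hfix : x⁻¹ * n = x
    · have hxx : x * x = n := by
        rw [hsq_iff]
        have hv := congrArg Units.val hfix
        rw [hinvval] at hv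
        field_simp at hv
        linear_combination -hv
      have e1 : U.filter (fun y => f y = s) = {x} := by
        ext y
        simp only [Finset.mem_filter, Finset.mem_singleton, Finset.mem_univ, true_and, U]
        rw [← hx, eq_comm, key, hfix, or_self]
      have e2 : F.filter (fun y => f y = s) = {x} := by
        ext y
        simp only [hF, Finset.mem_filter, Finset.mem_singleton, Finset.mem_univ, true_and, U]
        constructor
        · rintro ⟨-, hy⟩
          rcases (key x y).mp (hx.trans hy.symm) with h | h
          · exact h
          · rw [h, hfix]
        · rintro rfl; exact ⟨hxx, hx⟩
      rw [e1, e2]; rfl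
    · have hnsq : x * x ≠ n := by
        intro hxx
        apply hfix
        apply Units.ext
        rw [hinvval]
        rw [hsq_iff] at hxx
        rw [← hxx, inv_mul_cancel_left₀ hx0]
      have e1 : U.filter (fun y => f y = s) = {x, x⁻¹ * n} := by
        ext y
        simp only [Finset.mem_filter, Finset.mem_insert, Finset.mem_singleton,
          Finset.mem_univ, true_and, U]
        rw [← hx, eq_comm, key]
      have e2 : F.filter (fun y => f y = s) = ∅ := by
        ext y
        simp only [hF, Finset.mem_filter, Finset.mem_univ, true_and,
          Finset.notMem_empty, iff_false, U]
        rintro ⟨hyy, hy⟩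
        rcases (key x y).mp (hx.trans hy.symm) with h | h
        · subst h; exact hnsq hyy
        · subst h
          apply hnsq
          rw [hsq_iff] at hyy ⊢
          rw [hinvval] at hyy
          have ha : ((x:ZMod r) * x) * (((x:ZMod r)⁻¹ * N) * ((x:ZMod r)⁻¹ * N))
              = ((x:ZMod r) * x) * N := by rw [hyy]
          have hb : ((x:ZMod r) * x) * (((x:ZMod r)⁻¹ * N) * ((x:ZMod r)⁻¹ * N))
              = (N : ZMod r) * N := by field_simp
          exact mul_right_cancel₀ hN0 ((hb.symm.trans ha).symm)
      rw [e1, e2, Finset.card_empty, Finset.card_insert_of_notMem (by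
        simpa using fun h => hfix h.symm), Finset.card_singleton]
  have hcount : 2 * I.card = Fintype.card (ZMod r)ˣ + F.card := by
    have h1 : ∑ s ∈ I, (U.filter (fun x => f x = s)).card = U.card :=
      (Finset.card_eq_sum_card_image f U).symm
    have h2' : ∑ s ∈ I, (F.filter (fun x => f x = s)).card = F.card := by
      refine (Finset.card_eq_sum_card_fiberwise ?_).symm
      intro x hx
      exact Finset.mem_image_of_mem f (Finset.mem_univ x)
    calc 2 * I.card = ∑ _s ∈ I, 2 := by rw [Finset.sum_const, smul_eq_mul, mul_comm]
      _ = ∑ s ∈ I, ((U.filter (fun x => f x = s)).card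
            + (F.filter (fun x => f x = s)).card) := (Finset.sum_congr rfl h3).symm
      _ = U.card + F.card := by rw [Finset.sum_add_distrib, h1, h2']
      _ = Fintype.card (ZMod r)ˣ + F.card := by rw [Finset.card_univ]
  have hcardU : Fintype.card (ZMod r)ˣ = r - 1 := ZMod.card_units r
  have hncard : Set.ncard {s : ZMod r | ∃ x y : ZMod r, x * y = (N : ZMod r) ∧ x + y = s}
      = I.card := by
    rw [hset]
    rw [← Set.image_univ, ← Finset.coe_univ, ← Finset.coe_image, Set.ncard_coe_finset]
  have hrodd : r % 2 = 1 := Nat.odd_iff.mp (hr.odd_of_ne_two hodd)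
  have hr2 : 2 ≤ r := hr.two_le
  constructor
  · intro hsq
    obtain ⟨a, ha⟩ := hsq
    have ha0 : a ≠ 0 := fun h => hN0 (by rw [ha, h, mul_zero])
    have hFcard : F.card = 2 := by
      have hFeq : F = {Units.mk0 a ha0, -Units.mk0 a ha0} := by
        ext x
        simp only [hF, Finset.mem_filter, Finset.mem_univ, true_and,
          Finset.mem_insert, Finset.mem_singleton, U]
        rw [hsq_iff]
        constructor
        · intro hxx
          have hfac : ((x : ZMod r) - a) * ((x : ZMod r) + a) = 0 := by
            rw [ha] at hxx
            linear_combination hxx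
          rcases mul_eq_zero.mp hfac with h | h
          · left; exact Units.ext (sub_eq_zero.mp h)
          · right
            apply Units.ext
            rw [Units.val_neg, Units.val_mk0]
            exact eq_neg_of_add_eq_zero_left h
        · rintro (rfl | rfl)
          · rw [Units.val_mk0, ← ha]
          · rw [Units.val_neg, Units.val_mk0, neg_mul_neg, ← ha]
      rw [hFeq, Finset.card_insert_of_notMem, Finset.card_singleton]
      simp only [Finset.mem_singleton]
      intro h
      have hav : (a : ZMod r) = -a := by
        have := congrArg Units.val h
        simpa using this
      have h2a : (2 : ZMod r) * a = 0 := by linear_combination hav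
      rcases mul_eq_zero.mp h2a with h | h
      · exact h2 h
      · exact ha0 h
    rw [hncard]
    rw [hcardU, hFcard] at hcount
    omega
  · intro hnsq
    have hFcard : F.card = 0 := by
      rw [Finset.card_eq_zero]
      ext x
      simp only [hF, Finset.mem_filter, Finset.mem_univ, true_and,
        Finset.notMem_empty, iff_false, U]
      intro hxx
      exact hnsq ⟨x, ((hsq_iff x).mp hxx).symm⟩
    rw [hncard]
    rw [hcardU, hFcard] at hcount
    omega
end

section
/- Let N ∈ ℕ, B a real number, and Q = Π_{2 < r ≤ B, r prime} r, with gcd(N, Q) = 1. Then |L_{N,Q}| ∈ O(Q·log B / 2^π(B)) as B → ∞, where π(B) is the prime counting function; concretely, |L_{N,Q}|/Q ≤ (4/3)·Π_{r prime, r ≤ B} ((r+1)/2)/r, and the latter product is O(log B / 2^π(B)). -/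
/-!
By the Chinese remainder theorem `L_{N,Q}` is the product of the `L_{N,r}`, `r ∣ Q`. Modulo a
prime `r ∤ N` the sums are the values of `x ↦ x + N / x` on the nonzero residues; `x` and `N / x`
have the same value and differ unless `x ^ 2 = N`, so `2 |L_{N,r}| ≤ (r - 1) + 2`. The factor
`3 / 4` of the prime `2` accounts for the constant `4 / 3`.

For the second bound, `∏ ((r + 1) / 2) / r = 2 ^ (-π(B)) ∏ (1 + 1 / r)` and
`∏ (1 + 1 / r) ≤ exp (∑ 1 / r)`. Abel summation turns Mertens' estimate
`∑_{r ≤ n} log r / r ≤ log n + log 4` into `∑_{r ≤ n} 1 / r ≤ log log n + O(1)`; the estimate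
itself compares `n ∑ log r / r` with `log ∏ r ^ ⌊n / r⌋ ≤ log n! ≤ n log n` and Chebyshev's
`θ(n) ≤ n log 4`.
-/

open Finset Real
open scoped Nat

/-- The paper's `L_{N,Q}` is `factorSums (N : ZMod Q)`. -/
def factorSums {R : Type*} [Mul R] [Add R] (N : R) : Set R :=
  {s | ∃ x y, x * y = N ∧ x + y = s}

section factorSums

variable {R S : Type*}

theorem image_factorSums [Semiring R] [Semiring S] (e : R ≃+* S) (N : R) :
    e '' factorSums N = factorSums (e N) := by
  ext s
  constructor
  · rintro ⟨_, ⟨x, y, hxy, rfl⟩, rfl⟩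
    exact ⟨e x, e y, by rw [← map_mul, hxy], (map_add e x y).symm⟩
  · rintro ⟨x, y, hxy, rfl⟩
    refine ⟨e.symm x + e.symm y, ⟨e.symm x, e.symm y, ?_, rfl⟩, by simp⟩
    rw [← map_mul, hxy, e.symm_apply_apply]

theorem factorSums_prod_mk [Mul R] [Add R] [Mul S] [Add S] (a : R) (b : S) :
    factorSums (a, b) = factorSums a ×ˢ factorSums b := by
  ext ⟨s, t⟩
  constructor
  · rintro ⟨x, y, hxy, hs⟩
    exact ⟨⟨x.1, y.1, congrArg Prod.fst hxy, congrArg Prod.fst hs⟩,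
      ⟨x.2, y.2, congrArg Prod.snd hxy, congrArg Prod.snd hs⟩⟩
  · rintro ⟨⟨x₁, y₁, hxy₁, hs₁⟩, ⟨x₂, y₂, hxy₂, hs₂⟩⟩
    exact ⟨(x₁, x₂), (y₁, y₂), by simp [hxy₁, hxy₂], by simp [hs₁, hs₂]⟩

end factorSums

theorem ncard_factorSums_zmod_mul (N : ℕ) {m n : ℕ} (h : m.Coprime n) :
    (factorSums (N : ZMod (m * n))).ncard =
      (factorSums (N : ZMod m)).ncard * (factorSums (N : ZMod n)).ncard := by
  let e := ZMod.chineseRemainder h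
  have he : e N = ((N : ZMod m), (N : ZMod n)) := by rw [map_natCast]; rfl
  rw [← Set.ncard_image_of_injective _ e.injective, image_factorSums, he, factorSums_prod_mk,
    Set.ncard_prod]

theorem ncard_factorSums_zmod_one (N : ℕ) : (factorSums (N : ZMod 1)).ncard = 1 := by
  rw [Set.ncard_eq_one]
  refine ⟨0, Set.eq_singleton_iff_unique_mem.mpr ⟨?_, fun _ _ => Subsingleton.elim _ _⟩⟩
  exact ⟨0, 0, Subsingleton.elim _ _, Subsingleton.elim _ _⟩

theorem ncard_factorSums_zmod_prod (N : ℕ) {F : Finset ℕ}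
    (hF : (F : Set ℕ).Pairwise Nat.Coprime) :
    (factorSums (N : ZMod (∏ r ∈ F, r))).ncard =
      ∏ r ∈ F, (factorSums (N : ZMod r)).ncard := by
  classical
  induction F using Finset.induction_on with
  | empty => exact ncard_factorSums_zmod_one N
  | insert p F hp ih =>
    rw [coe_insert, Set.pairwise_insert] at hF
    have hcop : p.Coprime (∏ r ∈ F, r) :=
      Nat.Coprime.prod_right fun r hr => (hF.2 r hr (by rintro rfl; exact hp hr)).1
    rw [prod_insert hp, prod_insert hp, ncard_factorSums_zmod_mul N hcop, ih hF.1]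

theorem two_mul_ncard_factorSums_le {F : Type*} [Field F] [Fintype F] {N : F} (hN : N ≠ 0) :
    2 * (factorSums N).ncard ≤ Fintype.card F + 1 := by
  classical
  let f : F → F := fun x => x + N / x
  let T : Finset F := univ.erase 0
  let R : Finset F := T.filter (fun x => x ^ 2 = N)
  let S : Finset F := T.filter (fun x => x ^ 2 ≠ N)
  have hsub : factorSums N ⊆ ↑(R.image f ∪ S.image f) := by
    rintro _ ⟨x, y, hxy, rfl⟩
    have hx : x ≠ 0 := by rintro rfl; exact hN (by simpa using hxy.symm)
    have hy : y = N / x := by rw [← hxy]; field_simp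
    rw [← image_union, filter_union_filter_not_eq, hy]
    exact mem_image_of_mem f (mem_erase.mpr ⟨hx, mem_univ x⟩)
  have hS : 2 * #(S.image f) ≤ #S := by
    refine mul_card_image_le_card S 2 fun b hb => ?_
    obtain ⟨x, hxS, rfl⟩ := mem_image.mp hb
    obtain ⟨hxT, hx2⟩ := mem_filter.mp hxS
    have hx : x ≠ 0 := ne_of_mem_erase hxT
    have hNx : N / x ≠ 0 := div_ne_zero hN hx
    have hne : x ≠ N / x := by
      intro h; apply hx2; rw [sq]; nth_rewrite 2 [h]; field_simp
    have hmem : N / x ∈ S := by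
      refine mem_filter.mpr ⟨mem_erase.mpr ⟨hNx, mem_univ _⟩, fun h => hx2 ?_⟩
      field_simp at h; exact h.symm
    have hfx : f (N / x) = f x := by simp only [f]; field_simp; ring
    calc 2 = #{x, N / x} := (card_pair hne).symm
      _ ≤ _ := card_le_card (by
        intro z hz
        rcases mem_insert.mp hz with rfl | hz
        · exact mem_filter.mpr ⟨hxS, rfl⟩
        · rw [mem_singleton.mp hz]; exact mem_filter.mpr ⟨hmem, hfx⟩)
  have hR : #R ≤ 2 := by
    calc #R ≤ #(Polynomial.nthRootsFinset 2 N) := card_le_card fun x hx =>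
          (Polynomial.mem_nthRootsFinset two_pos N).mpr (mem_filter.mp hx).2
      _ ≤ 2 := by
        rw [Polynomial.nthRootsFinset_def]
        exact (Multiset.toFinset_card_le _).trans (Polynomial.card_nthRoots 2 N)
  have hRS : #R + #S = Fintype.card F - 1 := by
    rw [card_filter_add_card_filter_not, card_erase_of_mem (mem_univ _), card_univ]
  have hq : 1 ≤ Fintype.card F := Fintype.card_pos
  calc 2 * (factorSums N).ncard ≤ 2 * #(R.image f ∪ S.image f) := by
        rw [← Set.ncard_coe_finset (R.image f ∪ S.image f)]
        exact Nat.mul_le_mul_left 2 (Set.ncard_le_ncard hsub (finite_toSet _))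
    _ ≤ 2 * #R + 2 * #(S.image f) := by
        rw [← mul_add]
        exact Nat.mul_le_mul_left 2
          ((card_union_le _ _).trans (Nat.add_le_add_right card_image_le _))
    _ ≤ Fintype.card F + 1 := by omega

theorem ncard_factorSums_div_le_prod (N : ℕ) {F : Finset ℕ} (hF : ∀ r ∈ F, r.Prime)
    (hN : N.Coprime (∏ r ∈ F, r)) :
    ((factorSums (N : ZMod (∏ r ∈ F, r))).ncard : ℝ) / (∏ r ∈ F, r : ℕ) ≤
      ∏ r ∈ F, ((r : ℝ) + 1) / 2 / r := by
  have hpair : (F : Set ℕ).Pairwise Nat.Coprime := fun p hp q hq hpq =>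
    (Nat.coprime_primes (hF p hp) (hF q hq)).mpr hpq
  rw [ncard_factorSums_zmod_prod N hpair, Nat.cast_prod, Nat.cast_prod, ← prod_div_distrib]
  refine prod_le_prod (fun r _ => by positivity) fun r hr => ?_
  have hr' := hF r hr
  have := Fact.mk hr'
  have hNr : (N : ZMod r) ≠ 0 := by
    rw [Ne, ZMod.natCast_eq_zero_iff]
    exact (Nat.Prime.coprime_iff_not_dvd hr').mp
      (Nat.Coprime.coprime_dvd_right (dvd_prod_of_mem _ hr) hN).symm
  have h := two_mul_ncard_factorSums_le hNr
  rw [ZMod.card] at h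
  have h' : 2 * ((factorSums (N : ZMod r)).ncard : ℝ) ≤ r + 1 := by exact_mod_cast h
  gcongr
  linarith

theorem prod_odd_primesLE_le (n : ℕ) :
    ∏ r ∈ (range (n + 1)).filter (fun r => r.Prime ∧ 2 < r), ((r : ℝ) + 1) / 2 / r ≤
      4 / 3 * ∏ r ∈ n.primesLE, ((r : ℝ) + 1) / 2 / r := by
  set g : ℕ → ℝ := fun r => ((r : ℝ) + 1) / 2 / r
  have hodd :
      (range (n + 1)).filter (fun r => r.Prime ∧ 2 < r) = n.primesLE.filter (2 < ·) := by
    rw [Nat.primesLE_eq_filter_range, filter_filter]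
  have htwo : 3 / 4 ≤ ∏ r ∈ n.primesLE.filter (fun r => ¬ 2 < r), g r := by
    have : n.primesLE.filter (fun r => ¬ 2 < r) ⊆ {2} := fun r hr => by
      obtain ⟨hp, hr2⟩ := mem_filter.mp hr
      exact mem_singleton.mpr
        (le_antisymm (not_lt.mp hr2) (Nat.prime_of_mem_primesLE hp).two_le)
    rcases subset_singleton_iff.mp this with h | h <;> rw [h] <;> norm_num [g]
  have hpos : 0 ≤ ∏ r ∈ n.primesLE.filter (2 < ·), g r :=
    prod_nonneg fun _ _ => by positivity
  rw [hodd, ← prod_filter_mul_prod_filter_not n.primesLE (2 < ·)]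
  nlinarith

theorem Nat.Prime.pow_div_dvd_factorial {p : ℕ} (hp : p.Prime) (n : ℕ) :
    p ^ (n / p) ∣ n ! := by
  rcases lt_or_ge n p with hnp | hpn
  · simp [Nat.div_eq_of_lt hnp]
  rw [hp.pow_dvd_factorial_iff (Nat.lt_succ_self _)]
  have h1 : 1 ∈ Ico 1 (Nat.log p n + 1) := by simp [Nat.log_pos hp.one_lt hpn]
  simpa using single_le_sum (f := fun i => n / p ^ i) (fun _ _ => Nat.zero_le _) h1

theorem prod_primesLE_pow_div_dvd_factorial (n : ℕ) :
    ∏ p ∈ n.primesLE, p ^ (n / p) ∣ n ! := by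
  refine prod_dvd_of_isRelPrime (fun p hp q hq hpq => ?_) fun p hp =>
    (Nat.prime_of_mem_primesLE hp).pow_div_dvd_factorial n
  rw [Function.onFun, ← Nat.coprime_iff_isRelPrime]
  exact Nat.Coprime.pow _ _
    ((Nat.coprime_primes (Nat.prime_of_mem_primesLE hp) (Nat.prime_of_mem_primesLE hq)).mpr hpq)

theorem sum_primesLE_div_mul_log_le (n : ℕ) :
    ∑ p ∈ n.primesLE, ((n / p : ℕ) : ℝ) * log p ≤ n * log n := by
  have hpos : ∀ p ∈ n.primesLE, (0 : ℝ) < p := fun p hp => by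
    exact_mod_cast (Nat.prime_of_mem_primesLE hp).pos
  calc ∑ p ∈ n.primesLE, ((n / p : ℕ) : ℝ) * log p
      = log ((∏ p ∈ n.primesLE, p ^ (n / p) : ℕ) : ℝ) := by
        push_cast
        rw [log_prod fun p hp => (pow_pos (hpos p hp) _).ne']
        simp only [log_pow]
    _ ≤ log ((n ^ n : ℕ) : ℝ) := by
        refine log_le_log (Nat.cast_pos.mpr
          (prod_pos fun p hp => pow_pos (Nat.prime_of_mem_primesLE hp).pos _)) ?_
        exact_mod_cast (Nat.le_of_dvd n.factorial_pos
          (prod_primesLE_pow_div_dvd_factorial n)).trans n.factorial_le_pow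
    _ = n * log n := by push_cast; exact log_pow n n

theorem sum_primesLE_log_div_le {n : ℕ} (hn : n ≠ 0) :
    ∑ p ∈ n.primesLE, log p / p ≤ log n + log 4 := by
  have hn' : (0 : ℝ) < n := by exact_mod_cast Nat.pos_of_ne_zero hn
  have htheta : ∑ p ∈ n.primesLE, log p ≤ n * log 4 := by
    rw [← Chebyshev.theta_eq_sum_primesLE_log, mul_comm]
    exact Chebyshev.theta_le_log4_mul_x n.cast_nonneg
  have hfloor : ∀ p ∈ n.primesLE, n * (log p / p) ≤ (((n / p : ℕ) : ℝ) + 1) * log p := by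
    intro p hp
    have hp := Nat.prime_of_mem_primesLE hp
    have hp' : (0 : ℝ) < p := by exact_mod_cast hp.pos
    have hlt : (n : ℝ) < p * ((n / p : ℕ) + 1) := by
      exact_mod_cast Nat.lt_mul_div_succ n hp.pos
    calc n * (log p / p) = n / p * log p := by ring
      _ ≤ (((n / p : ℕ) : ℝ) + 1) * log p := by
        refine mul_le_mul_of_nonneg_right ?_ (log_nonneg (Nat.one_le_cast.mpr hp.one_le))
        rw [div_le_iff₀ hp']
        linarith
  have hsum : n * ∑ p ∈ n.primesLE, log p / p ≤ n * (log n + log 4) := by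
    calc n * ∑ p ∈ n.primesLE, log p / p
        ≤ ∑ p ∈ n.primesLE, (((n / p : ℕ) : ℝ) + 1) * log p := by
          rw [mul_sum]; exact sum_le_sum hfloor
      _ = ∑ p ∈ n.primesLE, ((n / p : ℕ) : ℝ) * log p + ∑ p ∈ n.primesLE, log p := by
          rw [← sum_add_distrib]; simp only [add_mul, one_mul]
      _ ≤ n * (log n + log 4) := by
          linarith [sum_primesLE_div_mul_log_le n]
  exact le_of_mul_le_mul_left hsum hn'

theorem sum_range_div_log_le {a : ℕ → ℝ} {c : ℝ} (ha : ∀ k, 0 ≤ a k)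
    (hA : ∀ m, 2 ≤ m → ∑ k ∈ range (m + 1), a k ≤ log m + c) {n : ℕ} (hn : 2 ≤ n) :
    ∑ k ∈ range (n + 1), a k / log k ≤ log (log n) + (c / log 2 - log (log 2) + 1) := by
  have hlog2 : 0 < log 2 := log_pos one_lt_two
  -- Abel summation as an invariant: by `hA`, going from `m` to `m + 1` costs at most
  -- `log m * (1 / log m - 1 / log (m + 1)) ≤ log (log (m + 1)) - log (log m)`.
  have key : ∀ m, 2 ≤ m →
      ∑ k ∈ range (m + 1), a k / log k - (∑ k ∈ range (m + 1), a k - c) / log m ≤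
        log (log m) + (c / log 2 - log (log 2)) := by
    intro m hm
    induction m, hm using Nat.le_induction with
    | base =>
      simp only [sum_range_succ, sum_range_zero, Nat.cast_zero, Nat.cast_one, Nat.cast_ofNat,
        log_zero, log_one, div_zero, zero_add]
      have h01 : 0 ≤ (a 0 + a 1) / log 2 := div_nonneg (add_nonneg (ha 0) (ha 1)) hlog2.le
      have : a 2 / log 2 - (a 0 + a 1 + a 2 - c) / log 2 = c / log 2 - (a 0 + a 1) / log 2 := by
        ring
      linarith
    | succ m hm ih =>
      set Q := ∑ k ∈ range (m + 1), a k / log k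
      set A := ∑ k ∈ range (m + 1), a k
      have hu : 0 < log m := log_pos (by exact_mod_cast hm)
      have huv : log m ≤ log (m + 1) := log_le_log (by positivity) (by linarith)
      have hv : 0 < log (m + 1) := hu.trans_le huv
      have hinv : 0 ≤ 1 / log m - 1 / log (m + 1) :=
        sub_nonneg.mpr (one_div_le_one_div_of_le hu huv)
      have hstep :
          (A - c) * (1 / log m - 1 / log (m + 1)) ≤ log (log (m + 1)) - log (log m) := by
        calc (A - c) * (1 / log m - 1 / log (m + 1))
            ≤ log m * (1 / log m - 1 / log (m + 1)) :=
              mul_le_mul_of_nonneg_right (by linarith [hA m hm]) hinv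
          _ = 1 - (log (m + 1) / log m)⁻¹ := by field_simp
          _ ≤ log (log (m + 1) / log m) := one_sub_inv_le_log_of_pos (div_pos hv hu)
          _ = log (log (m + 1)) - log (log m) := log_div hv.ne' hu.ne'
      rw [sum_range_succ (fun k => a k / log k) (m + 1), sum_range_succ a (m + 1), Nat.cast_succ]
      have : Q + a (m + 1) / log (m + 1) - (A + a (m + 1) - c) / log (m + 1)
          = Q - (A - c) / log m + (A - c) * (1 / log m - 1 / log (m + 1)) := by
        field_simp; ring
      linarith
  have hA' : (∑ k ∈ range (n + 1), a k - c) / log n ≤ 1 :=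
    div_le_one_of_le₀ (by linarith [hA n hn])
      (log_nonneg (by exact_mod_cast (by omega : 1 ≤ n)))
  linarith [key n hn]

theorem sum_primesLE_inv_le {n : ℕ} (hn : 2 ≤ n) :
    ∑ p ∈ n.primesLE, (1 : ℝ) / p ≤ log (log n) + (3 - log (log 2)) := by
  let a : ℕ → ℝ := fun k => if k.Prime then log k / k else 0
  have hsum (m : ℕ) : ∑ k ∈ range (m + 1), a k = ∑ p ∈ m.primesLE, log p / p := by
    rw [Nat.primesLE_eq_filter_range, sum_filter]
  have hinv : ∑ k ∈ range (n + 1), a k / log k = ∑ p ∈ n.primesLE, (1 : ℝ) / p := by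
    rw [Nat.primesLE_eq_filter_range, sum_filter]
    refine sum_congr rfl fun k _ => ?_
    by_cases hk : k.Prime
    · have : log k ≠ 0 := (log_pos (by exact_mod_cast hk.one_lt)).ne'
      simp only [a, if_pos hk]
      field_simp
    · simp [a, hk]
  have hlog4 : log 4 / log 2 + 1 = 3 := by
    rw [show (4 : ℝ) = 2 ^ 2 by norm_num, log_pow, mul_div_assoc,
      div_self (log_pos one_lt_two).ne']
    norm_num
  rw [← hinv, ← hlog4, add_sub_right_comm]
  refine sum_range_div_log_le (fun k => ?_) (fun m hm => ?_) hn
  · by_cases hk : k.Prime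
    · simp only [a, if_pos hk]; positivity
    · simp [a, hk]
  · rw [hsum]; exact sum_primesLE_log_div_le (by omega)

theorem prod_primesLE_one_add_inv_le {n : ℕ} (hn : 2 ≤ n) :
    ∏ p ∈ n.primesLE, (1 + (1 : ℝ) / p) ≤ exp (3 - log (log 2)) * log n := by
  have hlog : 0 < log n := log_pos (by exact_mod_cast hn)
  calc ∏ p ∈ n.primesLE, (1 + (1 : ℝ) / p) ≤ exp (∑ p ∈ n.primesLE, (1 : ℝ) / p) :=
        prod_one_add_le_exp_sum _ fun p => by positivity
    _ ≤ exp (log (log n) + (3 - log (log 2))) :=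
        exp_le_exp.mpr (sum_primesLE_inv_le hn)
    _ = exp (3 - log (log 2)) * log n := by rw [exp_add, exp_log hlog, mul_comm]

theorem prod_primesLE_succ_div_two_div_eq (n : ℕ) :
    ∏ r ∈ n.primesLE, ((r : ℝ) + 1) / 2 / r =
      (∏ r ∈ n.primesLE, (1 + (1 : ℝ) / r)) / 2 ^ #n.primesLE := by
  rw [← prod_const, ← prod_div_distrib]
  refine prod_congr rfl fun r hr => ?_
  have : (r : ℝ) ≠ 0 := by exact_mod_cast (Nat.prime_of_mem_primesLE hr).ne_zero
  field_simp

theorem stmt_14 :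
    (∀ (N : ℕ) (B : ℝ),
      Nat.Coprime N (∏ r ∈ (Finset.range (⌊B⌋₊ + 1)).filter
          (fun r => r.Prime ∧ 2 < r), r) →
      (Set.ncard {s : ZMod (∏ r ∈ (Finset.range (⌊B⌋₊ + 1)).filter
            (fun r => r.Prime ∧ 2 < r), r) |
          ∃ x y, x * y = (N : ZMod (∏ r ∈ (Finset.range (⌊B⌋₊ + 1)).filter
            (fun r => r.Prime ∧ 2 < r), r)) ∧ x + y = s} : ℝ) /
        (∏ r ∈ (Finset.range (⌊B⌋₊ + 1)).filter (fun r => r.Prime ∧ 2 < r), r : ℕ) ≤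
      (4 / 3) * ∏ r ∈ (Finset.range (⌊B⌋₊ + 1)).filter Nat.Prime,
        (((r : ℝ) + 1) / 2) / r) ∧
    ∃ C : ℝ, 0 < C ∧ ∀ B : ℝ, 2 ≤ B →
      (∏ r ∈ (Finset.range (⌊B⌋₊ + 1)).filter Nat.Prime, (((r : ℝ) + 1) / 2) / r) ≤
        C * Real.log B / 2 ^ ((Finset.range (⌊B⌋₊ + 1)).filter Nat.Prime).card := by
  refine ⟨fun N B hN => ?_, exp (3 - log (log 2)), exp_pos _, fun B hB => ?_⟩
  · exact (ncard_factorSums_div_le_prod N (fun r hr => (mem_filter.mp hr).2.1) hN).trans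
      (prod_odd_primesLE_le ⌊B⌋₊)
  · have hn : 2 ≤ ⌊B⌋₊ := Nat.le_floor (by exact_mod_cast hB)
    have hB' : log ⌊B⌋₊ ≤ log B := log_le_log (by positivity) (Nat.floor_le (by linarith))
    rw [← Nat.primesLE_eq_filter_range, prod_primesLE_succ_div_two_div_eq]
    gcongr
    exact (prod_primesLE_one_add_inv_le hn).trans (by gcongr)
end
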